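/- Let k ≥ 0, let y satisfy 2^k ≤ y < 2^{k+1}, and let x,z be integers with 0 ≤ x,z < 2^k. Then: (i) culam[y](2^k+x, z) = culam[y](x, 2^k+z); (ii) culam[y](x, 2^k+z) ≥ min(2, 2·culam[y](2^k+x, 2^k+z)); (iii) culam[y](x,z) = min(2, 2·culam[y](x, 2^k+z)). -/

import Mathlib

/-- Fuel-indexed Ulam predicate: a binary word (as a `List Bool`) of length 1 is Ulam,
and a longer word is Ulam iff it is expressible *uniquely* as a concatenation of two
distinct (nonempty) Ulam words. The fuel strictly exceeds the lengths needed. -/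
def ulamAux : ℕ → List Bool → Prop
  | 0, _ => False
  | n + 1, w =>
    if w.length = 1 then True
    else ∃! p : List Bool × List Bool,
      p.1 ≠ [] ∧ p.2 ≠ [] ∧ p.1 ≠ p.2 ∧ w = p.1 ++ p.2 ∧
        ulamAux n p.1 ∧ ulamAux n p.2

/-- A binary word is an Ulam word. -/
def IsUlam (w : List Bool) : Prop := ulamAux w.length w

/-- The word `0^x 1 0^y`. -/
def wordTwo (x y : ℕ) : List Bool :=
  List.replicate x false ++ [true] ++ List.replicate y false

/-- The word `0^x 1 0^y 1 0^z`. -/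
def wordThree (x y z : ℕ) : List Bool :=
  List.replicate x false ++ [true] ++ List.replicate y false ++ [true] ++
    List.replicate z false

/-- `UlamSet y` is the set of pairs `(x,z)` such that `0^x 1 0^y 1 0^z` is Ulam. -/
def UlamSet (y : ℕ) : Set (ℕ × ℕ) := {p | IsUlam (wordThree p.1 y p.2)}

/-- `culam y x z = min(2, N)` where `N` counts `0 ≤ a ≤ y` with both
`w(x,a)` and `w(y-a,z)` Ulam. -/
noncomputable def culam (y x z : ℕ) : ℕ :=
  min 2 {a : ℕ | a ≤ y ∧ IsUlam (wordTwo x a) ∧ IsUlam (wordTwo (y - a) z)}.ncard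

/-- A positive integer is Zumkeller if its binary representation has at most one `0`. -/
def IsZumkeller (y : ℕ) : Prop := 0 < y ∧ (Nat.bits y).count false ≤ 1

/-- The largest `e ≤ d - 1` with `x mod 2^(e+1) < 2^e` and `z mod 2^(e+1) < 2^e`
(and `0` if none exists). -/
def eIdx (d x z : ℕ) : ℕ :=
  Nat.findGreatest (fun e => x % 2 ^ (e + 1) < 2 ^ e ∧ z % 2 ^ (e + 1) < 2 ^ e) (d - 1)

/-- The universal pattern `E1[d]` on `B_d`. -/
def E1 (d x z : ℕ) : ℕ :=
  if 2 ^ d - 1 ≤ x + z then 0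
  else if x % 2 ^ eIdx d x z + z % 2 ^ eIdx d x z < 2 ^ eIdx d x z - 1 then 2 else 1

/-- The universal pattern `E2[d]` on `B_d` (constant `1`). -/
def E2 (_d _x _z : ℕ) : ℕ := 1

/-- The universal pattern `O1[d]` on `B_d`. -/
def O1 (d x z : ℕ) : ℕ :=
  if 2 ^ d - 2 ≤ x + z then 0
  else if (x + z) % 2 = 0 then (if x % 2 = 1 then 0 else 2)
  else if x % 2 ^ eIdx d x z + z % 2 ^ eIdx d x z < 2 ^ eIdx d x z - 1 then 2 else 1

/-- The universal pattern `O2[d]` on `B_d` (independent of `d`). -/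
def O2 (_d x z : ℕ) : ℕ :=
  if (x + z) % 2 = 0 then (if x % 2 = 1 then 0 else 2) else 1
lemma ulamAux_nil (n : ℕ) : ¬ ulamAux n [] := by
  cases n with
  | zero => simp [ulamAux]
  | succ n =>
    simp only [ulamAux, List.length_nil]
    rw [if_neg (by omega)]
    rintro ⟨⟨u, v⟩, ⟨h1, h2, h3, h4, _⟩, _⟩
    simp only at h4
    have := congrArg List.length h4
    simp only [List.length_append, List.length_nil] at this
    have hu : u.length = 0 := by omega
    exact h1 (List.eq_nil_of_length_eq_zero hu)

lemma ulamAux_succ : ∀ n (w : List Bool), w.length ≤ n → (ulamAux (n+1) w ↔ ulamAux n w) := by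
  intro n
  induction n with
  | zero =>
    intro w hw
    have : w = [] := List.eq_nil_of_length_eq_zero (by omega)
    subst this
    simp [ulamAux_nil]
  | succ m ih =>
    intro w hw
    show ulamAux (m+2) w ↔ ulamAux (m+1) w
    simp only [ulamAux]
    by_cases h1 : w.length = 1
    · simp [h1]
    · rw [if_neg h1, if_neg h1]
      apply existsUnique_congr
      rintro ⟨u, v⟩
      simp only
      constructor
      · rintro ⟨a1, a2, a3, a4, a5, a6⟩
        have hl := congrArg List.length a4
        simp [List.length_append] at hl
        have hu : u.length ≤ m := by
          have : 1 ≤ v.length := List.length_pos_iff.mpr a2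
          omega
        have hv : v.length ≤ m := by
          have : 1 ≤ u.length := List.length_pos_iff.mpr a1
          omega
        exact ⟨a1, a2, a3, a4, (ih u hu).mp a5, (ih v hv).mp a6⟩
      · rintro ⟨a1, a2, a3, a4, a5, a6⟩
        have hl := congrArg List.length a4
        simp [List.length_append] at hl
        have hu : u.length ≤ m := by
          have : 1 ≤ v.length := List.length_pos_iff.mpr a2
          omega
        have hv : v.length ≤ m := by
          have : 1 ≤ u.length := List.length_pos_iff.mpr a1
          omega
        exact ⟨a1, a2, a3, a4, (ih u hu).mpr a5, (ih v hv).mpr a6⟩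

lemma ulamAux_iff_isUlam : ∀ n (w : List Bool), w.length ≤ n → (ulamAux n w ↔ IsUlam w) := by
  intro n
  induction n with
  | zero =>
    intro w hw
    have : w = [] := List.eq_nil_of_length_eq_zero (by omega)
    subst this
    simp [IsUlam, ulamAux_nil]
  | succ m ih =>
    intro w hw
    by_cases h : w.length = m + 1
    · rw [IsUlam, h]
    · rw [ulamAux_succ m w (by omega)]
      exact ih w (by omega)

lemma isUlam_replicate_false : ∀ j, IsUlam (List.replicate j false) ↔ j = 1 := by
  intro j
  induction j using Nat.strong_induction_on with
  | _ j ih =>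
    match j with
    | 0 => simp [IsUlam, ulamAux_nil]
    | 1 => simp [IsUlam, ulamAux]
    | (m+2) =>
      simp only [IsUlam, List.length_replicate]
      rw [show ulamAux (m+2) (List.replicate (m+2) false) ↔ _ from by
        simp only [ulamAux, List.length_replicate]; rw [if_neg (by omega)]]
      constructor
      · rintro ⟨⟨u, v⟩, ⟨h1, h2, h3, h4, h5, h6⟩, _⟩
        exfalso
        simp only at h1 h2 h3 h4 h5 h6
        have hu : u = List.replicate u.length false :=
          List.eq_replicate_of_mem (fun b hb => List.eq_of_mem_replicate (h4 ▸ List.mem_append_left v hb))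
        have hv : v = List.replicate v.length false :=
          List.eq_replicate_of_mem (fun b hb => List.eq_of_mem_replicate (h4 ▸ List.mem_append_right u hb))
        have hl := congrArg List.length h4
        simp [List.length_append] at hl
        have hu1 : 1 ≤ u.length := List.length_pos_iff.mpr h1
        have hv1 : 1 ≤ v.length := List.length_pos_iff.mpr h2
        have hU : IsUlam u := (ulamAux_iff_isUlam (m+1) u (by omega)).mp h5
        have hV : IsUlam v := (ulamAux_iff_isUlam (m+1) v (by omega)).mp h6
        rw [hu] at hU; rw [hv] at hV
        have := (ih u.length (by omega)).mp hU
        have := (ih v.length (by omega)).mp hV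
        apply h3
        rw [hu, hv, ‹u.length = 1›, ‹v.length = 1›]
      · omega

/-- disjoint binary digits -/
def Dis (x y : ℕ) : Prop := ∀ i, ¬(x.testBit i = true ∧ y.testBit i = true)

lemma length_wordTwo (x y : ℕ) : (wordTwo x y).length = x + y + 1 := by
  simp [wordTwo]; omega

lemma true_mem_wordTwo (x y : ℕ) : true ∈ wordTwo x y := by
  simp [wordTwo]

lemma wordTwo_ne_rep (x y j : ℕ) : wordTwo x y ≠ List.replicate j false := by
  intro h
  have := true_mem_wordTwo x y
  rw [h] at this
  exact Bool.true_eq_false ▸ (List.eq_of_mem_replicate this)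

lemma count_true_wordTwo (x y : ℕ) : (wordTwo x y).count true = 1 := by
  simp [wordTwo, List.count_append, List.count_replicate]

lemma wordTwo_succ_left (x y : ℕ) : wordTwo (x+1) y = false :: wordTwo x y := by
  simp [wordTwo, List.replicate_succ]

lemma wordTwo_succ_right (x y : ℕ) : wordTwo x (y+1) = wordTwo x y ++ [false] := by
  simp [wordTwo, List.replicate_succ']

lemma isUlam_false : IsUlam [false] := by
  simp [IsUlam, ulamAux]

lemma ulam_no_true {u : List Bool} (hU : IsUlam u) (h : true ∉ u) : u = [false] := by
  have hu : u = List.replicate u.length false :=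
    List.eq_replicate_of_mem (fun b hb => by
      cases b with
      | true => exact absurd hb h
      | false => rfl)
  rw [hu] at hU ⊢
  rw [(isUlam_replicate_false u.length).mp hU]
  rfl

lemma decomp (x y : ℕ) (p : List Bool × List Bool) (h1 : p.1 ≠ []) (h2 : p.2 ≠ [])
    (h4 : wordTwo x y = p.1 ++ p.2) (hu1 : IsUlam p.1) (hu2 : IsUlam p.2) :
    (1 ≤ x ∧ p = ([false], wordTwo (x-1) y)) ∨ (1 ≤ y ∧ p = (wordTwo x (y-1), [false])) := by
  obtain ⟨u, v⟩ := p
  simp only at h1 h2 h4 hu1 hu2 ⊢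
  have hc : u.count true + v.count true = 1 := by
    rw [← List.count_append, ← h4, count_true_wordTwo]
  rcases Nat.eq_zero_or_pos (u.count true) with hcu | hcu
  · -- u has no true : u = [false]
    have hu : u = [false] := ulam_no_true hu1 (List.count_eq_zero.mp hcu)
    subst hu
    left
    match x with
    | 0 =>
      exfalso
      simp [wordTwo] at h4
    | x + 1 =>
      rw [wordTwo_succ_left] at h4
      refine ⟨by omega, ?_⟩
      simp only [Nat.add_sub_cancel, Prod.mk.injEq, true_and]
      simpa using h4.symm
  · -- v has no true
    have hcv : v.count true = 0 := by omega
    have hv : v = [false] := ulam_no_true hu2 (List.count_eq_zero.mp hcv)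
    subst hv
    right
    match y with
    | 0 =>
      exfalso
      have : wordTwo x 0 = List.replicate x false ++ [true] := by
        simp [wordTwo]
      rw [this] at h4
      have := (List.append_inj' h4 rfl).2
      simp at this
    | y + 1 =>
      rw [wordTwo_succ_right] at h4
      refine ⟨by omega, ?_⟩
      simp only [Nat.add_sub_cancel, Prod.mk.injEq, and_true]
      exact (List.append_cancel_right h4).symm

def ExOne (P Q : Prop) : Prop := (P ∧ ¬Q) ∨ (¬P ∧ Q)

lemma Dis_comm {a b : ℕ} : Dis a b ↔ Dis b a := by
  constructor <;> exact fun h i hi => h i ⟨hi.2, hi.1⟩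

lemma Dis_zero_left (b : ℕ) : Dis 0 b := by
  intro i hi
  simp [Nat.zero_testBit] at hi

lemma Dis_step (a b : ℕ) : Dis a b ↔ (a % 2 = 0 ∨ b % 2 = 0) ∧ Dis (a/2) (b/2) := by
  constructor
  · intro h
    refine ⟨?_, fun i hi => h (i+1) (by rwa [Nat.testBit_add_one, Nat.testBit_add_one])⟩
    by_contra hc
    push_neg at hc
    exact h 0 ⟨by rw [Nat.testBit_zero]; simp; omega, by rw [Nat.testBit_zero]; simp; omega⟩
  · rintro ⟨h0, h⟩ i hi
    cases i with
    | zero =>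
      rw [Nat.testBit_zero] at hi
      obtain ⟨hi1, hi2⟩ := hi
      simp at hi1 hi2
      omega
    | succ i =>
      rw [Nat.testBit_add_one, Nat.testBit_add_one] at hi
      exact h i hi

lemma Dis_odd_odd {a b : ℕ} (ha : a % 2 = 1) (hb : b % 2 = 1) : ¬Dis a b := by
  intro h
  exact h 0 ⟨by rw [Nat.testBit_zero]; simp [ha], by rw [Nat.testBit_zero]; simp [hb]⟩

lemma ExOne_congr {P P' Q Q' : Prop} (h1 : P ↔ P') (h2 : Q ↔ Q') : ExOne P Q ↔ ExOne P' Q' := by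
  unfold ExOne; rw [h1, h2]

lemma Dis_rec : ∀ n a b, a + b = n → 1 ≤ a + b →
    (Dis a b ↔ ExOne (1 ≤ a ∧ Dis (a-1) b) (1 ≤ b ∧ Dis a (b-1))) := by
  intro n
  induction n using Nat.strong_induction_on with
  | _ n ih =>
  intro a b hn h1
  rcases Nat.mod_two_eq_zero_or_one a with ha | ha <;>
    rcases Nat.mod_two_eq_zero_or_one b with hb | hb
  · -- even, even
    have key := ih ((a+b)/2) (by omega) (a/2) (b/2) (by omega) (by omega)
    have e1 : Dis a b ↔ Dis (a/2) (b/2) := by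
      rw [Dis_step]; tauto
    have e2 : (1 ≤ a ∧ Dis (a-1) b) ↔ (1 ≤ a/2 ∧ Dis (a/2-1) (b/2)) := by
      constructor
      · rintro ⟨h, hd⟩
        rw [Dis_step] at hd
        refine ⟨by omega, ?_⟩
        have : (a-1)/2 = a/2 - 1 := by omega
        rw [this] at hd
        exact hd.2
      · rintro ⟨h, hd⟩
        refine ⟨by omega, ?_⟩
        rw [Dis_step]
        have : (a-1)/2 = a/2 - 1 := by omega
        rw [this]
        exact ⟨by omega, hd⟩
    have e3 : (1 ≤ b ∧ Dis a (b-1)) ↔ (1 ≤ b/2 ∧ Dis (a/2) (b/2-1)) := by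
      constructor
      · rintro ⟨h, hd⟩
        rw [Dis_step] at hd
        refine ⟨by omega, ?_⟩
        have : (b-1)/2 = b/2 - 1 := by omega
        rw [this] at hd
        exact hd.2
      · rintro ⟨h, hd⟩
        refine ⟨by omega, ?_⟩
        rw [Dis_step]
        have : (b-1)/2 = b/2 - 1 := by omega
        rw [this]
        exact ⟨by omega, hd⟩
    rw [e1, ExOne_congr e2 e3, key]
  · -- a even, b odd
    have e1 : Dis a b ↔ Dis (a/2) (b/2) := by rw [Dis_step]; tauto
    have e2 : ¬(1 ≤ a ∧ Dis (a-1) b) := by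
      rintro ⟨h, hd⟩
      exact Dis_odd_odd (by omega) hb hd
    have e3 : (1 ≤ b ∧ Dis a (b-1)) ↔ Dis (a/2) (b/2) := by
      constructor
      · rintro ⟨h, hd⟩
        rw [Dis_step] at hd
        have : (b-1)/2 = b/2 := by omega
        rw [this] at hd
        exact hd.2
      · intro hd
        refine ⟨by omega, ?_⟩
        rw [Dis_step]
        have : (b-1)/2 = b/2 := by omega
        rw [this]
        exact ⟨by omega, hd⟩
    rw [e1]
    unfold ExOne
    tauto
  · -- a odd, b even
    have e1 : Dis a b ↔ Dis (a/2) (b/2) := by rw [Dis_step]; tauto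
    have e3 : ¬(1 ≤ b ∧ Dis a (b-1)) := by
      rintro ⟨h, hd⟩
      exact Dis_odd_odd ha (by omega) hd
    have e2 : (1 ≤ a ∧ Dis (a-1) b) ↔ Dis (a/2) (b/2) := by
      constructor
      · rintro ⟨h, hd⟩
        rw [Dis_step] at hd
        have : (a-1)/2 = a/2 := by omega
        rw [this] at hd
        exact hd.2
      · intro hd
        refine ⟨by omega, ?_⟩
        rw [Dis_step]
        have : (a-1)/2 = a/2 := by omega
        rw [this]
        exact ⟨by omega, hd⟩
    rw [e1]
    unfold ExOne
    tauto
  · -- odd, odd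
    have e1 : ¬ Dis a b := Dis_odd_odd ha hb
    have e2 : (1 ≤ a ∧ Dis (a-1) b) ↔ Dis (a/2) (b/2) := by
      constructor
      · rintro ⟨h, hd⟩
        rw [Dis_step] at hd
        have : (a-1)/2 = a/2 := by omega
        rw [this] at hd
        exact hd.2
      · intro hd
        refine ⟨by omega, ?_⟩
        rw [Dis_step]
        have : (a-1)/2 = a/2 := by omega
        rw [this]
        exact ⟨Or.inl (by omega), hd⟩
    have e3 : (1 ≤ b ∧ Dis a (b-1)) ↔ Dis (a/2) (b/2) := by
      constructor
      · rintro ⟨h, hd⟩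
        rw [Dis_step] at hd
        have : (b-1)/2 = b/2 := by omega
        rw [this] at hd
        exact hd.2
      · intro hd
        refine ⟨by omega, ?_⟩
        rw [Dis_step]
        have : (b-1)/2 = b/2 := by omega
        rw [this]
        exact ⟨Or.inr (by omega), hd⟩
    rw [e2.symm] at e3
    unfold ExOne
    tauto

lemma wordTwo_ne_nil (x y : ℕ) : wordTwo x y ≠ [] := by
  intro h
  have := length_wordTwo x y
  rw [h] at this
  simp at this

lemma wordTwo_ne_false (x y : ℕ) : wordTwo x y ≠ [false] := by
  have := wordTwo_ne_rep x y 1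
  simpa using this

lemma isUlam_wordTwo : ∀ n x y, x + y = n → (IsUlam (wordTwo x y) ↔ Dis x y) := by
  intro n
  induction n using Nat.strong_induction_on with
  | _ n ih =>
  intro x y hn
  match n, hn with
  | 0, hn =>
    have hx : x = 0 := by omega
    have hy : y = 0 := by omega
    subst hx; subst hy
    have : wordTwo 0 0 = [true] := rfl
    rw [this]
    constructor
    · intro _; intro i hi; simp [Nat.zero_testBit] at hi
    · intro _; simp [IsUlam, ulamAux]
  | (m+1), hn =>
    -- unfold one step of ulamAux
    have hlen : (wordTwo x y).length = m + 2 := by rw [length_wordTwo]; omega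
    have step1 : IsUlam (wordTwo x y) ↔
        ∃! p : List Bool × List Bool,
          p.1 ≠ [] ∧ p.2 ≠ [] ∧ p.1 ≠ p.2 ∧ wordTwo x y = p.1 ++ p.2 ∧
            IsUlam p.1 ∧ IsUlam p.2 := by
      rw [IsUlam, hlen]
      show ulamAux (m+2) (wordTwo x y) ↔ _
      simp only [ulamAux, hlen]
      rw [if_neg (by omega)]
      apply existsUnique_congr
      rintro ⟨u, v⟩
      simp only
      constructor
      · rintro ⟨a1, a2, a3, a4, a5, a6⟩
        have hl := congrArg List.length a4
        simp only [hlen, List.length_append] at hl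
        have hu1 : 1 ≤ u.length := List.length_pos_iff.mpr a1
        have hv1 : 1 ≤ v.length := List.length_pos_iff.mpr a2
        exact ⟨a1, a2, a3, a4, (ulamAux_iff_isUlam (m+1) u (by omega)).mp a5,
          (ulamAux_iff_isUlam (m+1) v (by omega)).mp a6⟩
      · rintro ⟨a1, a2, a3, a4, a5, a6⟩
        have hl := congrArg List.length a4
        simp only [hlen, List.length_append] at hl
        have hu1 : 1 ≤ u.length := List.length_pos_iff.mpr a1
        have hv1 : 1 ≤ v.length := List.length_pos_iff.mpr a2
        exact ⟨a1, a2, a3, a4, (ulamAux_iff_isUlam (m+1) u (by omega)).mpr a5,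
          (ulamAux_iff_isUlam (m+1) v (by omega)).mpr a6⟩
    rw [step1]
    have step2 : (∃! p : List Bool × List Bool,
          p.1 ≠ [] ∧ p.2 ≠ [] ∧ p.1 ≠ p.2 ∧ wordTwo x y = p.1 ++ p.2 ∧
            IsUlam p.1 ∧ IsUlam p.2) ↔
        ExOne (1 ≤ x ∧ IsUlam (wordTwo (x-1) y)) (1 ≤ y ∧ IsUlam (wordTwo x (y-1))) := by
      constructor
      · rintro ⟨p, ⟨h1, h2, h3, h4, h5, h6⟩, huniq⟩
        rcases decomp x y p h1 h2 h4 h5 h6 with ⟨hx1, hpe⟩ | ⟨hy1, hpe⟩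
        · left
          refine ⟨⟨hx1, by rw [hpe] at h6; exact h6⟩, ?_⟩
          rintro ⟨hy1, hU⟩
          have hq : (wordTwo x (y-1), ([false] : List Bool)) = p := by
            apply huniq
            refine ⟨wordTwo_ne_nil _ _, by simp, ?_, ?_, hU, isUlam_false⟩
            · exact wordTwo_ne_false x (y-1)
            · have := wordTwo_succ_right x (y-1)
              rw [show y - 1 + 1 = y by omega] at this
              exact this
          rw [hpe] at hq
          have : wordTwo x (y-1) = [false] := congrArg Prod.fst hq
          exact wordTwo_ne_false _ _ this
        · right
          refine ⟨?_, hy1, by rw [hpe] at h5; exact h5⟩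
          rintro ⟨hx1, hU⟩
          have hq : (([false] : List Bool), wordTwo (x-1) y) = p := by
            apply huniq
            refine ⟨by simp, wordTwo_ne_nil _ _, ?_, ?_, isUlam_false, hU⟩
            · exact (wordTwo_ne_false _ _ ∘ Eq.symm)
            · have := wordTwo_succ_left (x-1) y
              rw [show x - 1 + 1 = x by omega] at this
              exact this
          rw [hpe] at hq
          have : wordTwo x (y-1) = [false] := (congrArg Prod.fst hq).symm
          exact wordTwo_ne_false _ _ this
      · rintro (⟨⟨hx1, hU⟩, hnP2⟩ | ⟨hnP1, hy1, hU⟩)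
        · refine ⟨([false], wordTwo (x-1) y), ⟨by simp, wordTwo_ne_nil _ _,
            (wordTwo_ne_false _ _ ∘ Eq.symm), ?_, isUlam_false, hU⟩, ?_⟩
          · have := wordTwo_succ_left (x-1) y
            rw [show x - 1 + 1 = x by omega] at this
            exact this
          · rintro ⟨u, v⟩ ⟨h1, h2, h3, h4, h5, h6⟩
            rcases decomp x y (u,v) h1 h2 h4 h5 h6 with ⟨_, hpe⟩ | ⟨hy1, hpe⟩
            · exact hpe
            · exfalso
              apply hnP2
              refine ⟨hy1, ?_⟩
              have : u = wordTwo x (y-1) := congrArg Prod.fst hpe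
              rw [← this]; exact h5
        · refine ⟨(wordTwo x (y-1), [false]), ⟨wordTwo_ne_nil _ _, by simp,
            wordTwo_ne_false _ _, ?_, hU, isUlam_false⟩, ?_⟩
          · have := wordTwo_succ_right x (y-1)
            rw [show y - 1 + 1 = y by omega] at this
            exact this
          · rintro ⟨u, v⟩ ⟨h1, h2, h3, h4, h5, h6⟩
            rcases decomp x y (u,v) h1 h2 h4 h5 h6 with ⟨hx1, hpe⟩ | ⟨_, hpe⟩
            · exfalso
              apply hnP1
              refine ⟨hx1, ?_⟩
              have : v = wordTwo (x-1) y := congrArg Prod.snd hpe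
              rw [← this]; exact h6
            · exact hpe
    rw [step2]
    have e1 : (1 ≤ x ∧ IsUlam (wordTwo (x-1) y)) ↔ (1 ≤ x ∧ Dis (x-1) y) := by
      rcases Nat.eq_zero_or_pos x with h | h
      · simp [h]
      · rw [ih ((x-1)+y) (by omega) (x-1) y rfl]
    have e2 : (1 ≤ y ∧ IsUlam (wordTwo x (y-1))) ↔ (1 ≤ y ∧ Dis x (y-1)) := by
      rcases Nat.eq_zero_or_pos y with h | h
      · simp [h]
      · rw [ih (x+(y-1)) (by omega) x (y-1) rfl]
    rw [show ExOne (1 ≤ x ∧ IsUlam (wordTwo (x-1) y)) (1 ≤ y ∧ IsUlam (wordTwo x (y-1))) ↔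
        ExOne (1 ≤ x ∧ Dis (x-1) y) (1 ≤ y ∧ Dis x (y-1)) from by unfold ExOne; rw [e1, e2]]
    exact (Dis_rec (m+1) x y hn (by omega)).symm

lemma U_iff : ∀ x y, IsUlam (wordTwo x y) ↔ Dis x y := fun x y => isUlam_wordTwo (x+y) x y rfl

lemma Dis_iff_land (x y : ℕ) : Dis x y ↔ x &&& y = 0 := by
  constructor
  · intro h
    apply Nat.zero_of_testBit_eq_false
    intro i
    rw [Nat.testBit_land]
    by_contra hc
    simp only [Bool.not_eq_false, Bool.and_eq_true] at hc
    exact h i (by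
      rcases Bool.eq_false_or_eq_true (x.testBit i) with h1 | h1 <;>
      rcases Bool.eq_false_or_eq_true (y.testBit i) with h2 | h2 <;>
      simp_all)
  · intro h i hi
    have := Nat.testBit_land x y i
    rw [h, Nat.zero_testBit, hi.1, hi.2] at this
    simp at this

instance : ∀ x y, Decidable (Dis x y) := fun x y =>
  decidable_of_iff _ (Dis_iff_land x y).symm

lemma testBit_pow_add {k x : ℕ} (hx : x < 2^k) (i : ℕ) :
    (2^k + x).testBit i = (x.testBit i || decide (i = k)) := by
  rcases lt_trichotomy i k with h | h | h
  · rw [Nat.testBit_two_pow_add_gt h]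
    simp [Nat.ne_of_lt h]
  · subst h
    rw [Nat.testBit_two_pow_add_eq, Nat.testBit_eq_false_of_lt hx]
    simp
  · have h1 : 2^k + x < 2^i := by
      calc 2^k + x < 2^k + 2^k := by omega
      _ = 2^(k+1) := by rw [pow_succ]; omega
      _ ≤ 2^i := Nat.pow_le_pow_right (by norm_num) h
    rw [Nat.testBit_eq_false_of_lt h1,
      Nat.testBit_eq_false_of_lt (lt_of_lt_of_le hx (Nat.pow_le_pow_right (by norm_num) (le_of_lt h)))]
    simp [Nat.ne_of_gt h]

lemma testBit_false_iff_lt {a k : ℕ} (h : a < 2^(k+1)) : a.testBit k = false ↔ a < 2^k := by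
  constructor
  · intro hb
    by_contra hc
    push_neg at hc
    have : a = 2^k + (a - 2^k) := by omega
    rw [this, Nat.testBit_two_pow_add_eq,
      Nat.testBit_eq_false_of_lt (show a - 2^k < 2^k by rw [pow_succ] at h; omega)] at hb
    simp at hb
  · exact fun h' => Nat.testBit_eq_false_of_lt h'

lemma Dis_pow_add_left {k x a : ℕ} (hx : x < 2^k) :
    Dis (2^k + x) a ↔ Dis x a ∧ a.testBit k = false := by
  constructor
  · intro h
    constructor
    · intro i hi
      exact h i ⟨by rw [testBit_pow_add hx, hi.1]; simp, hi.2⟩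
    · by_contra hc
      simp only [Bool.not_eq_false] at hc
      exact h k ⟨by rw [testBit_pow_add hx]; simp, hc⟩
  · rintro ⟨h1, h2⟩ i hi
    rw [testBit_pow_add hx] at hi
    rcases hi with ⟨hi1, hi2⟩
    simp only [Bool.or_eq_true, decide_eq_true_eq] at hi1
    rcases hi1 with hi1 | rfl
    · exact h1 i ⟨hi1, hi2⟩
    · rw [h2] at hi2; simp at hi2

lemma Dis_pow_add_both {k t z : ℕ} (ht : t < 2^k) (hz : z < 2^k) :
    Dis (2^k + t) z ↔ Dis t z := by
  rw [Dis_pow_add_left ht, Nat.testBit_eq_false_of_lt hz]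
  simp

lemma Dis_comm' {a b : ℕ} : Dis a b ↔ Dis b a := by
  constructor <;> exact fun h i hi => h i ⟨hi.2, hi.1⟩

lemma Dis_mono_right {x a a' : ℕ} (hsub : ∀ i, a'.testBit i = true → a.testBit i = true)
    (h : Dis x a) : Dis x a' := fun i hi => h i ⟨hi.1, hsub i hi.2⟩

lemma Dis_mono_left {x b b' : ℕ} (hsub : ∀ i, b'.testBit i = true → b.testBit i = true)
    (h : Dis b x) : Dis b' x := fun i hi => h i ⟨hsub i hi.1, hi.2⟩

lemma carry : ∀ k a b, a < 2^k → b < 2^k → 2^k ≤ a + b →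
    ∃ a' b', a' + b' + 2^k = a + b ∧ (∀ i, a'.testBit i = true → a.testBit i = true) ∧
      (∀ i, b'.testBit i = true → b.testBit i = true) := by
  intro k
  induction k with
  | zero => intro a b ha hb hab; omega
  | succ k ih =>
    intro a b ha hb hab
    rw [pow_succ] at ha hb hab
    by_cases h1 : 2^k ≤ a <;> by_cases h2 : 2^k ≤ b
    · refine ⟨a - 2^k, b - 2^k, by rw [pow_succ]; omega, ?_, ?_⟩
      · intro i hi
        have : a = 2^k + (a - 2^k) := by omega
        rw [this, testBit_pow_add (by omega), hi]
        simp
      · intro i hi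
        have : b = 2^k + (b - 2^k) := by omega
        rw [this, testBit_pow_add (by omega), hi]
        simp
    · obtain ⟨a', b', hsum, hba, hbb⟩ := ih (a - 2^k) b (by omega) (by omega) (by omega)
      refine ⟨a', b', by rw [pow_succ]; omega, ?_, hbb⟩
      intro i hi
      have h3 : a = 2^k + (a - 2^k) := by omega
      rw [h3, testBit_pow_add (by omega), hba i hi]
      simp
    · obtain ⟨a', b', hsum, hba, hbb⟩ := ih a (b - 2^k) (by omega) (by omega) (by omega)
      refine ⟨a', b', by rw [pow_succ]; omega, hba, ?_⟩
      intro i hi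
      have h3 : b = 2^k + (b - 2^k) := by omega
      rw [h3, testBit_pow_add (by omega), hbb i hi]
      simp
    · omega

lemma culam_eq (y X Z : ℕ) : culam y X Z =
    min 2 (((Finset.range (y+1)).filter (fun a => Dis X a ∧ Dis (y-a) Z)).card) := by
  unfold culam
  congr 1
  rw [← Set.ncard_coe_finset]
  congr 1
  ext a
  simp only [Set.mem_setOf_eq, Finset.coe_filter, Finset.mem_range, Nat.lt_succ_iff,
    U_iff]

/-- relations among the four quarters of the periodic block of
`culam[y]` for `2^k ≤ y < 2^(k+1)`. -/
theorem culam_four_parts (k y : ℕ) (h1 : 2 ^ k ≤ y) (h2 : y < 2 ^ (k + 1))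
    (x z : ℕ) (hx : x < 2 ^ k) (hz : z < 2 ^ k) :
    culam y (2 ^ k + x) z = culam y x (2 ^ k + z) ∧
    min 2 (2 * culam y (2 ^ k + x) (2 ^ k + z)) ≤ culam y x (2 ^ k + z) ∧
    culam y x z = min 2 (2 * culam y x (2 ^ k + z)) := by
  have hpow : 2^(k+1) = 2^k + 2^k := by rw [pow_succ]; omega
  set y' := y - 2^k with hy'def
  have hyy : y = 2^k + y' := by omega
  have hy'lt : y' < 2^k := by omega
  have hbit : ∀ a, a ≤ y → (Nat.testBit a k = false ↔ a < 2^k) :=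
    fun a ha => testBit_false_iff_lt (by omega)
  set T := (Finset.range (y'+1)).filter (fun a => Dis x a ∧ Dis (y'-a) z) with hT
  set C := (Finset.Ico (y'+1) (2^k)).filter (fun a => Dis x a ∧ Dis (y-a) z) with hC
  have memT : ∀ a, a ∈ T ↔ (a ≤ y' ∧ Dis x a ∧ Dis (y'-a) z) := by
    intro a
    simp only [hT, Finset.mem_filter, Finset.mem_range, Nat.lt_succ_iff]
  have memC : ∀ a, a ∈ C ↔ ((y'+1 ≤ a ∧ a < 2^k) ∧ Dis x a ∧ Dis (y-a) z) := by
    intro a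
    simp only [hC, Finset.mem_filter, Finset.mem_Ico]
  -- E1
  have E1 : (Finset.range (y+1)).filter (fun a => Dis (2^k+x) a ∧ Dis (y-a) z) = T ∪ C := by
    ext a
    simp only [Finset.mem_filter, Finset.mem_range, Nat.lt_succ_iff, Finset.mem_union,
      memT, memC]
    constructor
    · rintro ⟨hay, hd1, hd2⟩
      rw [Dis_pow_add_left hx] at hd1
      obtain ⟨hdxa, hbk⟩ := hd1
      have hak : a < 2^k := (hbit a hay).mp hbk
      by_cases hle : a ≤ y'
      · left
        refine ⟨hle, hdxa, ?_⟩
        have he : y - a = 2^k + (y' - a) := by omega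
        rw [he, Dis_pow_add_both (by omega) hz] at hd2
        exact hd2
      · right
        exact ⟨⟨by omega, hak⟩, hdxa, hd2⟩
    · rintro (⟨ha, hdxa, hd2⟩ | ⟨⟨ha1, ha2⟩, hdxa, hd2⟩)
      · refine ⟨by omega, ?_, ?_⟩
        · rw [Dis_pow_add_left hx]
          exact ⟨hdxa, (hbit a (by omega)).mpr (by omega)⟩
        · have he : y - a = 2^k + (y' - a) := by omega
          rw [he, Dis_pow_add_both (by omega) hz]
          exact hd2
      · refine ⟨by omega, ?_, hd2⟩
        rw [Dis_pow_add_left hx]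
        exact ⟨hdxa, (hbit a (by omega)).mpr ha2⟩
  -- E2
  have E2 : (Finset.range (y+1)).filter (fun a => Dis x a ∧ Dis (y-a) (2^k+z)) =
      C ∪ T.image (fun a => 2^k + a) := by
    ext a
    simp only [Finset.mem_filter, Finset.mem_range, Nat.lt_succ_iff, Finset.mem_union,
      Finset.mem_image, memT, memC]
    constructor
    · rintro ⟨hay, hd1, hd2⟩
      rw [Dis_comm', Dis_pow_add_left hz] at hd2
      obtain ⟨hdza, hbk⟩ := hd2
      have hlt : y - a < 2^k := (hbit (y-a) (by omega)).mp hbk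
      by_cases hak : a < 2^k
      · left
        exact ⟨⟨by omega, hak⟩, hd1, Dis_comm'.mp hdza⟩
      · right
        refine ⟨a - 2^k, ⟨by omega, ?_, ?_⟩, by omega⟩
        · have he : a = 2^k + (a - 2^k) := by omega
          rw [he, Dis_comm', Dis_pow_add_both (by omega) hx] at hd1
          exact Dis_comm'.mp hd1
        · have he : y' - (a - 2^k) = y - a := by omega
          rw [he]
          exact Dis_comm'.mp hdza
    · rintro (⟨⟨ha1, ha2⟩, hdxa, hd2⟩ | ⟨a', ⟨ha', hdxa', hd2'⟩, rfl⟩)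
      · refine ⟨by omega, hdxa, ?_⟩
        rw [Dis_comm', Dis_pow_add_left hz]
        exact ⟨Dis_comm'.mp hd2, (hbit (y-a) (by omega)).mpr (by omega)⟩
      · refine ⟨by omega, ?_, ?_⟩
        · rw [Dis_comm', Dis_pow_add_both (by omega) hx]
          exact Dis_comm'.mp hdxa'
        · have he : y - (2^k + a') = y' - a' := by omega
          rw [he, Dis_comm', Dis_pow_add_left hz]
          refine ⟨Dis_comm'.mp hd2', ?_⟩
          exact (hbit (y' - a') (by omega)).mpr (by omega)
  -- E3
  have E3 : (Finset.range (y+1)).filter (fun a => Dis (2^k+x) a ∧ Dis (y-a) (2^k+z)) = C := by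
    ext a
    simp only [Finset.mem_filter, Finset.mem_range, Nat.lt_succ_iff, memC]
    constructor
    · rintro ⟨hay, hd1, hd2⟩
      rw [Dis_pow_add_left hx] at hd1
      obtain ⟨hdxa, hbk⟩ := hd1
      have hak : a < 2^k := (hbit a hay).mp hbk
      rw [Dis_comm', Dis_pow_add_left hz] at hd2
      obtain ⟨hdza, hbk2⟩ := hd2
      have hlt : y - a < 2^k := (hbit (y-a) (by omega)).mp hbk2
      exact ⟨⟨by omega, hak⟩, hdxa, Dis_comm'.mp hdza⟩
    · rintro ⟨⟨ha1, ha2⟩, hdxa, hd2⟩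
      refine ⟨by omega, ?_, ?_⟩
      · rw [Dis_pow_add_left hx]
        exact ⟨hdxa, (hbit a (by omega)).mpr ha2⟩
      · rw [Dis_comm', Dis_pow_add_left hz]
        exact ⟨Dis_comm'.mp hd2, (hbit (y-a) (by omega)).mpr (by omega)⟩
  -- E4
  have E4 : (Finset.range (y+1)).filter (fun a => Dis x a ∧ Dis (y-a) z) =
      (T ∪ C) ∪ T.image (fun a => 2^k + a) := by
    ext a
    simp only [Finset.mem_filter, Finset.mem_range, Nat.lt_succ_iff, Finset.mem_union,
      Finset.mem_image, memT, memC]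
    constructor
    · rintro ⟨hay, hd1, hd2⟩
      by_cases hak : a < 2^k
      · by_cases hle : a ≤ y'
        · left; left
          refine ⟨hle, hd1, ?_⟩
          have he : y - a = 2^k + (y' - a) := by omega
          rw [he, Dis_pow_add_both (by omega) hz] at hd2
          exact hd2
        · left; right
          exact ⟨⟨by omega, hak⟩, hd1, hd2⟩
      · right
        refine ⟨a - 2^k, ⟨by omega, ?_, ?_⟩, by omega⟩
        · have he : a = 2^k + (a - 2^k) := by omega
          rw [he, Dis_comm', Dis_pow_add_both (by omega) hx] at hd1
          exact Dis_comm'.mp hd1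
        · have he : y' - (a - 2^k) = y - a := by omega
          rw [he]
          exact hd2
    · rintro ((⟨ha, hdxa, hd2⟩ | ⟨⟨ha1, ha2⟩, hdxa, hd2⟩) | ⟨a', ⟨ha', hdxa', hd2'⟩, rfl⟩)
      · refine ⟨by omega, hdxa, ?_⟩
        have he : y - a = 2^k + (y' - a) := by omega
        rw [he, Dis_pow_add_both (by omega) hz]
        exact hd2
      · exact ⟨by omega, hdxa, hd2⟩
      · refine ⟨by omega, ?_, ?_⟩
        · rw [Dis_comm', Dis_pow_add_both (by omega) hx]
          exact Dis_comm'.mp hdxa'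
        · have he : y - (2^k + a') = y' - a' := by omega
          rw [he]
          exact hd2'
  -- disjointness and cards
  have hdisTC : Disjoint T C := by
    rw [Finset.disjoint_left]
    intro a haT haC
    rw [memT a] at haT
    rw [memC a] at haC
    omega
  have hmemIm : ∀ a, a ∈ T.image (fun a => 2^k + a) → 2^k ≤ a := by
    intro a ha
    simp only [Finset.mem_image] at ha
    obtain ⟨a', _, rfl⟩ := ha
    omega
  have hdisCI : Disjoint C (T.image (fun a => 2^k + a)) := by
    rw [Finset.disjoint_left]
    intro a haC haI
    have := hmemIm a haI
    rw [memC a] at haC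
    omega
  have hdisTCI : Disjoint (T ∪ C) (T.image (fun a => 2^k + a)) := by
    rw [Finset.disjoint_left]
    intro a haTC haI
    have := hmemIm a haI
    rcases Finset.mem_union.mp haTC with h | h
    · rw [memT a] at h; omega
    · rw [memC a] at h; omega
  have hIm : (T.image (fun a => 2^k + a)).card = T.card :=
    Finset.card_image_of_injective _ (fun a b hab => by omega)
  have hc1 : culam y (2^k+x) z = min 2 (T.card + C.card) := by
    rw [culam_eq, E1, Finset.card_union_of_disjoint hdisTC]
  have hc2 : culam y x (2^k+z) = min 2 (C.card + T.card) := by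
    rw [culam_eq, E2, Finset.card_union_of_disjoint hdisCI, hIm]
  have hc3 : culam y (2^k+x) (2^k+z) = min 2 C.card := by
    rw [culam_eq, E3]
  have hc4 : culam y x z = min 2 (T.card + C.card + T.card) := by
    rw [culam_eq, E4, Finset.card_union_of_disjoint hdisTCI,
      Finset.card_union_of_disjoint hdisTC, hIm]
  have hCT : 0 < C.card → 0 < T.card := by
    intro hc
    obtain ⟨a, ha⟩ := Finset.card_pos.mp hc
    rw [memC a] at ha
    obtain ⟨⟨ha1, ha2⟩, hdxa, hdz⟩ := ha
    obtain ⟨a', b', hsum, hba, hbb⟩ := carry k a (y - a) ha2 (by omega) (by omega)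
    apply Finset.card_pos.mpr
    refine ⟨a', (memT a').mpr ⟨by omega, ?_, ?_⟩⟩
    · exact Dis_mono_right hba hdxa
    · have he : y' - a' = b' := by omega
      rw [he]
      exact Dis_mono_left hbb hdz
  rw [hc1, hc2, hc3, hc4]
  rcases Nat.eq_zero_or_pos C.card with h | h
  · refine ⟨by omega, by omega, by omega⟩
  · have := hCT h
    refine ⟨by omega, by omega, by omega⟩
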